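/- Let G be a CGS, s a state of G, and φ a positive ATL* formula. For any two type functions π1, π2 : Ag → {IR, Ir, iR, ir} with π1 ⪯_{Ag_φ} π2: if (G, π2), s ⊨ φ, then (G, π1), s ⊨ φ. -/
import Mathlib


namespace ACGS

/-- Strategy types: perfect/imperfect information (`I`/`i`) and
perfect/imperfect recall (`R`/`r`). -/
inductive SType where
  | IR | Ir | iR | ir
deriving DecidableEq

/-- A concurrent game structure. -/
structure CGS (S Agt AP : Type) (Ac : Agt → Type) where
  init : Set S
  sim : Agt → S → S → Prop
  sim_equiv : ∀ i, Equivalence (sim i)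
  prot : (i : Agt) → S → Set (Ac i)
  prot_nonempty : ∀ i s, (prot i s).Nonempty
  prot_sim : ∀ i s s', sim i s s' → prot i s = prot i s'
  trans : S → ((i : Agt) → Ac i) → S
  label : S → Set AP

variable {S Agt AP : Type} {Ac : Agt → Type}

/-- A history: a nonempty list of states, most recent state first. -/
abbrev Hist (S : Type) : Type := { l : List S // l ≠ [] }

/-- The current (last) state of a history. -/
def Hist.cur (h : Hist S) : S := h.1.head h.2

def Hist.one (s : S) : Hist S := ⟨[s], by simp⟩

def Hist.cons (s : S) (h : Hist S) : Hist S := ⟨s :: h.1, by simp⟩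

/-- Indistinguishability of (equal-length) histories for agent `i`:
componentwise epistemic accessibility. -/
def Hist.sim (G : CGS S Agt AP Ac) (i : Agt) (h h' : Hist S) : Prop :=
  List.Forall₂ (G.sim i) h.1 h'.1

/-- A strategy of agent `i` (a priori with perfect information and perfect recall):
a protocol-respecting function from histories to local actions. -/
structure Strat (G : CGS S Agt AP Ac) (i : Agt) where
  act : Hist S → Ac i
  legal : ∀ h, act h ∈ G.prot i h.cur

/-- `θ` is a `σ`-strategy of agent `i`.  `Ir`- and `ir`-strategies are (extensions
to histories of) functions of the last state, `iR`-strategies respect history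
indistinguishability, `ir`-strategies moreover respect state indistinguishability. -/
def StratOfType (G : CGS S Agt AP Ac) (i : Agt) : SType → Strat G i → Prop
  | .IR, _ => True
  | .Ir, θ => ∀ h h', h.cur = h'.cur → θ.act h = θ.act h'
  | .iR, θ => ∀ h h', Hist.sim G i h h' → θ.act h = θ.act h'
  | .ir, θ => ∀ h h', G.sim i h.cur h'.cur → θ.act h = θ.act h'

/-- A full strategy profile. -/
def Profile (G : CGS S Agt AP Ac) := ∀ i, Strat G i

/-- The history of the unique play from `s` where all agents follow `η`. -/
def playHist (G : CGS S Agt AP Ac) (η : Profile G) (s : S) : ℕ → Hist S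
  | 0 => Hist.one s
  | n+1 =>
    let h := playHist G η s n
    Hist.cons (G.trans h.cur fun i => (η i).act h) h

/-- The unique play from `s` where every agent follows the profile `η`. -/
def play (G : CGS S Agt AP Ac) (η : Profile G) (s : S) (n : ℕ) : S :=
  (playHist G η s n).cur

/-- An agents' abilities augmented concurrent game structure (ACGS):
a CGS together with a strategy type for each agent; the epistemic
accessibility relation of perfect-information agents is the identity. -/
structure ACGSModel (S Agt AP : Type) (Ac : Agt → Type) where
  G : CGS S Agt AP Ac
  pi : Agt → SType
  sim_id : ∀ i, (pi i = .IR ∨ pi i = .Ir) → ∀ s s', G.sim i s s' → s = s'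

/-- A collective strategy of the coalition `A`. -/
def CollStrat (M : ACGSModel S Agt AP Ac) (A : Set Agt) : Type :=
  ∀ i, i ∈ A → Strat M.G i

/-- Each member of the coalition uses a strategy of its declared type. -/
def CollOk (M : ACGSModel S Agt AP Ac) (A : Set Agt) (ξ : CollStrat M A) : Prop :=
  ∀ i (h : i ∈ A), StratOfType M.G i (M.pi i) (ξ i h)

/-- Outcomes in an ACGS: plays from `s` in which each `i ∈ A` follows `ξ i`
and each agent outside `A` follows some `π(i)`-strategy. -/
def outcomesM (M : ACGSModel S Agt AP Ac) (s : S) (A : Set Agt) (ξ : CollStrat M A) :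
    Set (ℕ → S) :=
  { ρ | ∃ η : Profile M.G, (∀ i (h : i ∈ A), η i = ξ i h) ∧
      (∀ i, i ∉ A → StratOfType M.G i (M.pi i) (η i)) ∧ ρ = play M.G η s }

/-- A collective strategy of `A` in a plain CGS. -/
def CollStratC (G : CGS S Agt AP Ac) (A : Set Agt) : Type :=
  ∀ i, i ∈ A → Strat G i

/-- A collective `σ`-strategy. -/
def CollOkC (G : CGS S Agt AP Ac) (σ : SType) (A : Set Agt) (ξ : CollStratC G A) : Prop :=
  ∀ i (h : i ∈ A), StratOfType G i σ (ξ i h)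

/-- Outcomes in a plain CGS: plays from `s` in which each `i ∈ A` follows `ξ i`
and each agent outside `A` follows an arbitrary (`IR`-) strategy. -/
def outcomesC (G : CGS S Agt AP Ac) (s : S) (A : Set Agt) (ξ : CollStratC G A) :
    Set (ℕ → S) :=
  { ρ | ∃ η : Profile G, (∀ i (h : i ∈ A), η i = ξ i h) ∧ ρ = play G η s }


mutual
/-- ATL* state formulas. -/
inductive SForm (Agt AP : Type) where
  | atom : AP → SForm Agt AP
  | neg : SForm Agt AP → SForm Agt AP
  | conj : SForm Agt AP → SForm Agt AP → SForm Agt AP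
  | coal : Set Agt → PForm Agt AP → SForm Agt AP
/-- ATL* path formulas. -/
inductive PForm (Agt AP : Type) where
  | ofS : SForm Agt AP → PForm Agt AP
  | neg : PForm Agt AP → PForm Agt AP
  | conj : PForm Agt AP → PForm Agt AP → PForm Agt AP
  | next : PForm Agt AP → PForm Agt AP
  | untl : PForm Agt AP → PForm Agt AP → PForm Agt AP
end

mutual
/-- ACGS semantics of ATL* state formulas. -/
def sSat (M : ACGSModel S Agt AP Ac) : S → SForm Agt AP → Prop
  | s, .atom q => q ∈ M.G.label s
  | s, .neg φ => ¬ sSat M s φ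
  | s, .conj φ₁ φ₂ => sSat M s φ₁ ∧ sSat M s φ₂
  | s, .coal A ψ => ∃ ξ : CollStrat M A, CollOk M A ξ ∧
      ∀ ρ ∈ outcomesM M s A ξ, pSat M ρ ψ
/-- ACGS semantics of ATL* path formulas. -/
def pSat (M : ACGSModel S Agt AP Ac) : (ℕ → S) → PForm Agt AP → Prop
  | ρ, .ofS φ => sSat M (ρ 0) φ
  | ρ, .neg ψ => ¬ pSat M ρ ψ
  | ρ, .conj ψ₁ ψ₂ => pSat M ρ ψ₁ ∧ pSat M ρ ψ₂
  | ρ, .next ψ => pSat M (fun n => ρ (n+1)) ψ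
  | ρ, .untl ψ₁ ψ₂ => ∃ k, pSat M (fun n => ρ (n+k)) ψ₂ ∧
      ∀ j < k, pSat M (fun n => ρ (n+j)) ψ₁
end

mutual
/-- The set of agents appearing (in coalitions) in a state formula. -/
def agS : SForm Agt AP → Set Agt
  | .atom _ => ∅
  | .neg φ => agS φ
  | .conj φ₁ φ₂ => agS φ₁ ∪ agS φ₂
  | .coal A ψ => A ∪ agP ψ
/-- The set of agents appearing (in coalitions) in a path formula. -/
def agP : PForm Agt AP → Set Agt
  | .ofS φ => agS φ
  | .neg ψ => agP ψ
  | .conj ψ₁ ψ₂ => agP ψ₁ ∪ agP ψ₂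
  | .next ψ => agP ψ
  | .untl ψ₁ ψ₂ => agP ψ₁ ∪ agP ψ₂
end

/-- `π₁` is coarser than `π₂` with respect to `A` (`π₁ ⪯_A π₂`). -/
def coarser (π₁ π₂ : Agt → SType) (A : Set Agt) : Prop :=
  (∀ i ∈ A, π₁ i = π₂ i) ∧
  ∀ j ∉ A,
    (π₁ j = .IR ∧ π₂ j = .IR) ∨
    (π₁ j = .Ir ∧ (π₂ j = .IR ∨ π₂ j = .Ir)) ∨
    (π₁ j = .iR ∧ (π₂ j = .IR ∨ π₂ j = .iR)) ∨
    π₁ j = .ir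

mutual
/-- Positive ATL* state formulas: each coalition modality carries an LTL body,
no dual coalition modality occurs, and negations appear only in front of
atomic propositions. -/
inductive PosS : SForm Agt AP → Prop
  | atom (q : AP) : PosS (.atom q)
  | negAtom (q : AP) : PosS (.neg (.atom q))
  | conj {φ₁ φ₂ : SForm Agt AP} : PosS φ₁ → PosS φ₂ → PosS (.conj φ₁ φ₂)
  | coal (A : Set Agt) {ψ : PForm Agt AP} : PosLTL ψ → PosS (.coal A ψ)
/-- LTL path formulas (state subformulas are atoms) in which negations appear
only in front of atomic propositions. -/
inductive PosLTL : PForm Agt AP → Prop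
  | atom (q : AP) : PosLTL (.ofS (.atom q))
  | negAtomS (q : AP) : PosLTL (.ofS (.neg (.atom q)))
  | negAtomP (q : AP) : PosLTL (.neg (.ofS (.atom q)))
  | conj {ψ₁ ψ₂ : PForm Agt AP} : PosLTL ψ₁ → PosLTL ψ₂ → PosLTL (.conj ψ₁ ψ₂)
  | next {ψ : PForm Agt AP} : PosLTL ψ → PosLTL (.next ψ)
  | untl {ψ₁ ψ₂ : PForm Agt AP} : PosLTL ψ₁ → PosLTL ψ₂ → PosLTL (.untl ψ₁ ψ₂)
end


lemma head_sim {G : CGS S Agt AP Ac} {i : Agt} {h h' : Hist S}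
    (hs : Hist.sim G i h h') : G.sim i h.cur h'.cur := by
  obtain ⟨l, hl⟩ := h; obtain ⟨l', hl'⟩ := h'
  cases hs with
  | nil => exact absurd rfl hl
  | cons hr _ => exact hr

lemma strat_of_ir {G : CGS S Agt AP Ac} {i : Agt} {θ : Strat G i}
    (h : StratOfType G i .ir θ) : ∀ σ, StratOfType G i σ θ
  | .IR => trivial
  | .Ir => fun h1 h2 he => h h1 h2 (he ▸ (G.sim_equiv i).refl _)
  | .iR => fun h1 h2 hs => h h1 h2 (head_sim hs)
  | .ir => h

lemma coarser_anti {π₁ π₂ : Agt → SType} {A A' : Set Agt} (hsub : A' ⊆ A)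
    (h : coarser π₁ π₂ A) : coarser π₁ π₂ A' := by
  refine ⟨fun i hi => h.1 i (hsub hi), fun j hj => ?_⟩
  by_cases hjA : j ∈ A
  · have he := h.1 j hjA
    cases hp : π₁ j with
    | IR => exact Or.inl ⟨rfl, by rw [← he, hp]⟩
    | Ir => exact Or.inr (Or.inl ⟨rfl, Or.inr (by rw [← he, hp])⟩)
    | iR => exact Or.inr (Or.inr (Or.inl ⟨rfl, Or.inr (by rw [← he, hp])⟩))
    | ir => exact Or.inr (Or.inr (Or.inr rfl))
  · exact h.2 j hjA

lemma strat_mono {G : CGS S Agt AP Ac} {π₁ π₂ : Agt → SType} {j : Agt}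
    (hd : (π₁ j = .IR ∧ π₂ j = .IR) ∨
      (π₁ j = .Ir ∧ (π₂ j = .IR ∨ π₂ j = .Ir)) ∨
      (π₁ j = .iR ∧ (π₂ j = .IR ∨ π₂ j = .iR)) ∨
      π₁ j = .ir)
    {θ : Strat G j} (hθ : StratOfType G j (π₁ j) θ) :
    StratOfType G j (π₂ j) θ := by
  rcases hd with ⟨e1, e2⟩ | ⟨e1, e2 | e2⟩ | ⟨e1, e2 | e2⟩ | e1
  · rw [e2]; trivial
  · rw [e2]; trivial
  · rw [e2, ← e1]; exact hθ
  · rw [e2]; trivial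
  · rw [e2, ← e1]; exact hθ
  · exact strat_of_ir (e1 ▸ hθ) _

/-- For a positive ATL* formula `φ` and type functions with `π₁ ⪯_{Ag_φ} π₂`:
if `(G, π₂), s ⊨ φ` then `(G, π₁), s ⊨ φ`. -/
theorem pos_sat_anti_of_coarser {S Agt AP : Type} {Ac : Agt → Type}
    (G : CGS S Agt AP Ac) (s : S) (φ : SForm Agt AP) (hpos : PosS φ)
    (π₁ π₂ : Agt → SType)
    (h₁ : ∀ i, (π₁ i = .IR ∨ π₁ i = .Ir) → ∀ s s', G.sim i s s' → s = s')
    (h₂ : ∀ i, (π₂ i = .IR ∨ π₂ i = .Ir) → ∀ s s', G.sim i s s' → s = s')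
    (hc : coarser π₁ π₂ (agS φ)) :
    sSat ⟨G, π₂, h₂⟩ s φ → sSat ⟨G, π₁, h₁⟩ s φ := by
  refine PosS.rec
    (motive_1 := fun φ _ => ∀ s, coarser π₁ π₂ (agS φ) →
      sSat ⟨G, π₂, h₂⟩ s φ → sSat ⟨G, π₁, h₁⟩ s φ)
    (motive_2 := fun ψ _ => ∀ ρ, pSat ⟨G, π₂, h₂⟩ ρ ψ → pSat ⟨G, π₁, h₁⟩ ρ ψ)
    ?_ ?_ ?_ ?_ ?_ ?_ ?_ ?_ ?_ ?_ hpos s hc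
  · intro q t _ h; simpa [sSat] using h
  · intro q t _ h; simpa [sSat] using h
  · intro φ₁ φ₂ _ _ ih₁ ih₂ t hco h
    simp only [sSat] at h ⊢
    exact ⟨ih₁ t (coarser_anti (by intro x hx; exact Or.inl hx) hco) h.1,
      ih₂ t (coarser_anti (by intro x hx; exact Or.inr hx) hco) h.2⟩
  · intro A ψ _ ih t hco h
    simp only [sSat] at h ⊢
    obtain ⟨ξ, hok, hout⟩ := h
    refine ⟨ξ, ?_, ?_⟩
    · intro i hi
      have h' := hok i hi
      show StratOfType G i (π₁ i) (ξ i hi)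
      rw [show π₁ i = π₂ i from hco.1 i (Or.inl hi)]; exact h' 
    · rintro ρ ⟨η, hA, hB, rfl⟩
      refine ih _ (hout _ ⟨η, hA, ?_, rfl⟩)
      intro j hj
      by_cases hjψ : j ∈ agP ψ
      · show StratOfType G j (π₂ j) (η j)
        rw [← show π₁ j = π₂ j from hco.1 j (Or.inr hjψ)]; exact hB j hj
      · exact strat_mono (hco.2 j (by simp [agS]; tauto)) (hB j hj)
  · intro q ρ h; simpa [pSat, sSat] using h
  · intro q ρ h; simpa [pSat, sSat] using h
  · intro q ρ h; simpa [pSat, sSat] using h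
  · intro ψ₁ ψ₂ _ _ ih₁ ih₂ ρ h
    simp only [pSat] at h ⊢
    exact ⟨ih₁ _ h.1, ih₂ _ h.2⟩
  · intro ψ _ ih ρ h
    simp only [pSat] at h ⊢
    exact ih _ h
  · intro ψ₁ ψ₂ _ _ ih₁ ih₂ ρ h
    simp only [pSat] at h ⊢
    obtain ⟨k, hk, hj⟩ := h
    exact ⟨k, ih₂ _ hk, fun j hjk => ih₁ _ (hj j hjk)⟩

end ACGS
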